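/- Let f ∈ F_q[x] be squarefree, σ̃(a) = a^(q^s) the s-th power Frobenius on F_q[x]/(f) of order d, and p a prime with p^e exactly dividing d. Then g = gcd(σ̃^(d/p)(x) − x, f) is the product of the irreducible factors of f whose degree divides s·d/p, and f/g is the product of those irreducible factors of f whose degree is divisible by s·p^e. -/

import Mathlib

/-!
The relation `σ̃ᵈ = 1` says that `X ^ q ^ (s * d) ≡ X` modulo `f`, so every irreducible factor
of `f` has degree `s * t` with `t ∣ d`. Such a factor divides `X ^ q ^ (s * (d / p)) - X`, i.e.
lies in `g`, exactly when `t ∣ d / p`, which for a divisor `t` of `d` means `p ^ e ∤ t`.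
As `f` is squarefree, the irreducible factors of `f / g` are the remaining ones, those with
`p ^ e ∣ t`, and a squarefree monic polynomial is the product of its monic irreducible factors.
-/

open Polynomial UniqueFactorizationMonoid

theorem Nat.dvd_div_prime_iff_not_pow_dvd {p d e t : ℕ} (hp : p.Prime) (he : e ≠ 0)
    (hpe : p ^ e ∣ d) (hpe' : ¬ p ^ (e + 1) ∣ d) (htd : t ∣ d) :
    t ∣ d / p ↔ ¬ p ^ e ∣ t := by
  have hpd : p ∣ d := (dvd_pow_self p he).trans hpe
  constructor
  · intro htdp hpt
    exact hpe' (pow_succ p e ▸ Nat.div_mul_cancel hpd ▸ mul_dvd_mul_right (hpt.trans htdp) p)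
  · intro hpt
    obtain ⟨k, rfl⟩ := htd
    -- `p ^ e` divides `t * k` but not `t`, so `p` cannot be coprime to `k`.
    have hpk : p ∣ k := by
      by_contra hpk
      exact hpt ((Nat.Coprime.pow_left e (hp.coprime_iff_not_dvd.mpr hpk)).dvd_of_dvd_mul_right
        hpe)
    obtain ⟨k, rfl⟩ := hpk
    rw [mul_left_comm, Nat.mul_div_cancel_left _ hp.pos]
    exact dvd_mul_right t k

theorem Nat.dvd_mul_div_prime_iff_not_mul_pow_dvd {p d e s n : ℕ} (hp : p.Prime) (he : e ≠ 0)
    (hpe : p ^ e ∣ d) (hpe' : ¬ p ^ (e + 1) ∣ d) (hs : 0 < s) (hsn : s ∣ n) (hnd : n ∣ s * d) :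
    n ∣ s * (d / p) ↔ ¬ s * p ^ e ∣ n := by
  obtain ⟨t, rfl⟩ := hsn
  rw [Nat.mul_dvd_mul_iff_left hs, Nat.mul_dvd_mul_iff_left hs]
  exact Nat.dvd_div_prime_iff_not_pow_dvd hp he hpe hpe' ((Nat.mul_dvd_mul_iff_left hs).mp hnd)

theorem Squarefree.prime_dvd_right_iff {α : Type*} [CommMonoidWithZero α] {a b h : α}
    (hab : Squarefree (a * b)) (hh : Prime h) : h ∣ b ↔ h ∣ a * b ∧ ¬ h ∣ a := by
  refine ⟨fun hb => ⟨dvd_mul_of_dvd_right hb a, fun ha => hh.not_isUnit ?_⟩, fun ⟨hab', ha⟩ => ?_⟩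
  · exact hab h (mul_dvd_mul ha hb)
  · exact (hh.dvd_or_dvd hab').resolve_left ha

namespace Polynomial

theorem Monic.eq_prod_of_mem_iff {K : Type*} [Field K] [DecidableEq K] {g : K[X]}
    (hg : g.Monic) (hsq : Squarefree g) {S : Finset K[X]}
    (hS : ∀ h, h ∈ S ↔ h.Monic ∧ Irreducible h ∧ h ∣ g) :
    g = ∏ h ∈ S, h := by
  have hS' : S = (normalizedFactors g).toFinset := by
    ext h
    rw [hS, Multiset.mem_toFinset, Polynomial.mem_normalizedFactors_iff hg.ne_zero]
    tauto
  have hnodup := (squarefree_iff_nodup_normalizedFactors hg.ne_zero).mp hsq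
  rw [hS', Finset.prod_eq_multiset_prod, Multiset.toFinset_val, hnodup.dedup, Multiset.map_id',
    prod_normalizedFactors_eq hg.ne_zero, hg.normalize_eq_self]

theorem dvd_X_pow_pow_sub_X_of_pow_eq_one {R : Type*} [CommRing R] {f : R[X]} {n d : ℕ}
    (σ : (R[X] ⧸ Ideal.span {f}) ≃ₐ[R] (R[X] ⧸ Ideal.span {f})) (hσ : ∀ a, σ a = a ^ n)
    (hσd : σ ^ d = 1) : f ∣ X ^ n ^ d - X := by
  have hX : (σ ^ d) (Ideal.Quotient.mk _ X) = Ideal.Quotient.mk _ X := by rw [hσd]; rfl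
  have hσ' : ⇑σ = (· ^ n) := _root_.funext hσ
  rw [AlgEquiv.coe_pow, hσ', pow_iterate] at hX
  rw [← Ideal.mem_span_singleton, ← Ideal.Quotient.eq_zero_iff_mem, map_sub, map_pow,
    sub_eq_zero]
  exact hX

theorem Irreducible.dvd_normalize_gcd_X_pow_card_pow_sub_X_iff {K : Type*} [Field K] [Finite K]
    [DecidableEq K] {h : K[X]} (hh : Irreducible h) (f : K[X]) (n : ℕ) :
    h ∣ normalize (EuclideanDomain.gcd (X ^ Nat.card K ^ n - X) f) ↔
      h ∣ f ∧ h.natDegree ∣ n := by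
  rw [dvd_normalize_iff, hh.natDegree_dvd_iff_dvd_X_pow_card_pow_sub_X, and_comm]
  exact ⟨fun hg => ⟨hg.trans (EuclideanDomain.gcd_dvd_left _ _),
    hg.trans (EuclideanDomain.gcd_dvd_right _ _)⟩, fun ⟨h1, h2⟩ => EuclideanDomain.dvd_gcd h1 h2⟩

end Polynomial

theorem stmt12_general (F : Type*) [Field F] [Fintype F] [DecidableEq F]
    (s d p e : ℕ) (hs : 1 ≤ s) (hp : p.Prime)
    (hpe : p ^ e ∣ d) (hpe' : ¬ p ^ (e + 1) ∣ d) (hepos : 1 ≤ e)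
    (f : F[X]) (hsq : Squarefree f) (hmon : f.Monic)
    (hdvd : ∀ h : F[X], Irreducible h → h ∣ f → s ∣ h.natDegree)
    (σ : (F[X] ⧸ Ideal.span {f}) ≃ₐ[F] (F[X] ⧸ Ideal.span {f}))
    (hσ : ∀ a, σ a = a ^ (Fintype.card F) ^ s)
    (hord : orderOf σ = d)
    (g : F[X])
    (hg : g = normalize (EuclideanDomain.gcd
      (X ^ (Fintype.card F) ^ (s * (d / p)) - X : F[X]) f)) :
    (∀ S : Finset F[X],
      (∀ h : F[X], h ∈ S ↔ h.Monic ∧ Irreducible h ∧ h ∣ f ∧ h.natDegree ∣ s * (d / p)) →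
      g = ∏ h ∈ S, h) ∧
    (∀ S : Finset F[X],
      (∀ h : F[X], h ∈ S ↔ h.Monic ∧ Irreducible h ∧ h ∣ f ∧ s * p ^ e ∣ h.natDegree) →
      f / g = ∏ h ∈ S, h) := by
  rw [← Nat.card_eq_fintype_card] at hσ hg
  have hfX : f ∣ X ^ Nat.card F ^ (s * d) - X := by
    rw [pow_mul]
    exact dvd_X_pow_pow_sub_X_of_pow_eq_one σ hσ (hord ▸ pow_orderOf_eq_one σ)
  have hg_dvd : ∀ h, Irreducible h → (h ∣ g ↔ h ∣ f ∧ h.natDegree ∣ s * (d / p)) :=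
    fun h hh => hg ▸ hh.dvd_normalize_gcd_X_pow_card_pow_sub_X_iff f _
  have hgf : g ∣ f := hg ▸ (normalize_dvd_iff.mpr (EuclideanDomain.gcd_dvd_right _ _))
  have hgmon : g.Monic := hg ▸ monic_normalize
    fun h0 => hmon.ne_zero (EuclideanDomain.gcd_eq_zero_iff.mp h0).2
  have hfg : g * (f / g) = f := EuclideanDomain.mul_div_cancel' hgmon.ne_zero hgf
  have hsq' : Squarefree (g * (f / g)) := by rwa [hfg]
  have hfg_dvd : ∀ h, Irreducible h → (h ∣ f / g ↔ h ∣ f ∧ s * p ^ e ∣ h.natDegree) := by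
    intro h hh
    rw [hsq'.prime_dvd_right_iff hh.prime, hfg, hg_dvd h hh]
    refine and_congr_right fun hhf => ?_
    rw [and_iff_right hhf, Nat.dvd_mul_div_prime_iff_not_mul_pow_dvd hp (by omega) hpe hpe'
      (by omega) (hdvd h hh hhf) (hh.natDegree_dvd_of_dvd_X_pow_card_pow_sub_X (hhf.trans hfX)),
      not_not]
  refine ⟨fun S hS => hgmon.eq_prod_of_mem_iff hsq'.of_mul_left fun h => ?_,
    fun S hS => (hgmon.of_mul_monic_left (by rwa [hfg])).eq_prod_of_mem_iff
      hsq'.of_mul_right fun h => ?_⟩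
  · exact (hS h).trans (and_congr_right' <| and_congr_right fun hh => (hg_dvd h hh).symm)
  · exact (hS h).trans (and_congr_right' <| and_congr_right fun hh => (hfg_dvd h hh).symm)

theorem stmt12 (F : Type*) [Field F] [Fintype F] [DecidableEq F]
    (s d p e : ℕ) (hs : 1 ≤ s) (hd : 1 ≤ d) (hp : p.Prime)
    (hpe : p ^ e ∣ d) (hpe' : ¬ p ^ (e + 1) ∣ d) (hepos : 1 ≤ e)
    (f : F[X]) (hsq : Squarefree f) (hmon : f.Monic) (hdeg : 0 < f.natDegree)
    (hdvd : ∀ h : F[X], Irreducible h → h ∣ f → s ∣ h.natDegree)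
    (σ : (F[X] ⧸ Ideal.span {f}) ≃ₐ[F] (F[X] ⧸ Ideal.span {f}))
    (hσ : ∀ a, σ a = a ^ (Fintype.card F) ^ s)
    (hord : orderOf σ = d)
    (g : F[X])
    (hg : g = normalize (EuclideanDomain.gcd
      (X ^ (Fintype.card F) ^ (s * (d / p)) - X : F[X]) f)) :
    (∀ S : Finset F[X],
      (∀ h : F[X], h ∈ S ↔ h.Monic ∧ Irreducible h ∧ h ∣ f ∧ h.natDegree ∣ s * (d / p)) →
      g = ∏ h ∈ S, h) ∧
    (∀ S : Finset F[X],
      (∀ h : F[X], h ∈ S ↔ h.Monic ∧ Irreducible h ∧ h ∣ f ∧ s * p ^ e ∣ h.natDegree) →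
      f / g = ∏ h ∈ S, h) :=
  stmt12_general F s d p e hs hp hpe hpe' hepos f hsq hmon hdvd σ hσ hord g hg
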